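/- arXiv:math/0507192 — 4 statements merged into one kernel-verified Lean document; each statement's English description precedes it below -/
import Mathlib

section
/- Let A be a commutative ring and A' a faithfully flat commutative A-algebra. Then the quotient A-module A'/A (the cokernel of the structure map A → A') is flat over A. -/
set_option maxHeartbeats 1000000
set_option synthInstance.maxHeartbeats 200000

open TensorProduct LinearMap

/-- Over a faithfully flat algebra `A'`, the map `n ↦ n ⊗ 1 : N → N ⊗ A'` is injective. -/
lemma tmul_one_injective_of_faithfullyFlat (A A' : Type) [CommRing A] [CommRing A']
    [Algebra A A'] [Module.FaithfullyFlat A A'] (N : Type) [AddCommGroup N] [Module A N] :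
    Function.Injective (fun n : N => n ⊗ₜ[A] (1 : A')) := by
  set g : N →ₗ[A] N ⊗[A] A' := (TensorProduct.mk A N A').flip 1 with hg
  have hgapp : ∀ n : N, g n = n ⊗ₜ[A] (1 : A') := fun n => rfl
  set K := LinearMap.ker g with hK
  -- `rTensor A' g` has a retraction, hence is injective
  have hret : (LinearMap.lTensor N (LinearMap.mul' A A')).comp
      ((TensorProduct.assoc A N A' A').toLinearMap.comp (LinearMap.rTensor A' g)) =
      LinearMap.id := by
    apply TensorProduct.ext'
    intro n a
    simp [hgapp]
  have hinj : Function.Injective (LinearMap.rTensor A' g) := by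
    have hli : Function.LeftInverse
        (fun w => (LinearMap.lTensor N (LinearMap.mul' A A'))
          ((TensorProduct.assoc A N A' A') w))
        (LinearMap.rTensor A' g) := by
      intro w
      have := congrArg (fun m => m w) hret
      simpa using this
    exact hli.injective
  -- the composite `K ⊗ A' → N ⊗ A' → (N ⊗ A') ⊗ A'` is zero
  have hcomp : (LinearMap.rTensor A' g).comp (LinearMap.rTensor A' K.subtype) = 0 := by
    rw [← LinearMap.rTensor_comp]
    have : g.comp K.subtype = 0 := by
      ext k; exact k.2
    rw [this, LinearMap.rTensor_zero]
  have hKsub : Function.Injective (LinearMap.rTensor A' K.subtype) :=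
    Module.Flat.rTensor_preserves_injective_linearMap K.subtype (Submodule.injective_subtype K)
  have hsub : Subsingleton (K ⊗[A] A') := by
    refine subsingleton_iff_forall_eq 0 |>.2 fun w => ?_
    have h0 : (LinearMap.rTensor A' g) ((LinearMap.rTensor A' K.subtype) w) = 0 := by
      rw [← LinearMap.comp_apply, hcomp]; rfl
    have h1 : (LinearMap.rTensor A' K.subtype) w = 0 := by
      apply hinj
      simpa using h0
    apply hKsub
    simpa using h1
  have : Subsingleton K := Module.FaithfullyFlat.rTensor_reflects_triviality A A' K
  have hKbot : K = ⊥ := by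
    ext x
    simp only [Submodule.mem_bot]
    constructor
    · intro hx
      have : (⟨x, hx⟩ : K) = ⟨0, K.zero_mem⟩ := Subsingleton.elim _ _
      exact congrArg Subtype.val this
    · rintro rfl; exact K.zero_mem
  have hginj : Function.Injective g := by
    rw [← LinearMap.ker_eq_bot, ← hK, hKbot]
  exact hginj

/-- **Drinfeld's lemma.** If `A'` is a faithfully flat commutative algebra over a
commutative ring `A`, then the quotient `A'/A` (the cokernel of the structure map
`A → A'`) is a flat `A`-module. -/
theorem drinfeld_quotient_flat (A A' : Type) [CommRing A] [CommRing A'] [Algebra A A']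
    [Module.FaithfullyFlat A A'] :
    Module.Flat A (A' ⧸ LinearMap.range (Algebra.linearMap A A')) := by
  set f := Algebra.linearMap A A' with hf
  rw [Module.Flat.iff_rTensor_injective']
  intro I
  rw [injective_iff_map_eq_zero]
  intro x hx
  -- lift x along the surjection I ⊗ A' → I ⊗ (A'/A)
  obtain ⟨y, rfl⟩ := LinearMap.lTensor_surjective (↥I)
    (Submodule.mkQ_surjective (LinearMap.range f)) x
  -- ψ : the multiplication map I ⊗ A' → A'
  set ψ : (↥I) ⊗[A] A' →ₗ[A] A' :=
    TensorProduct.lift ((LinearMap.lsmul A A').comp I.subtype) with hψ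
  set z := ψ y with hz
  -- the image of z in A'/A is zero
  have hπz : (LinearMap.range f).mkQ z = 0 := by
    have hcomm : ∀ w : (↥I) ⊗[A] A',
        (LinearMap.range f).mkQ (ψ w) =
        (TensorProduct.lid A (A' ⧸ LinearMap.range f))
          ((LinearMap.rTensor (A' ⧸ LinearMap.range f) I.subtype)
            ((LinearMap.lTensor (↥I) (LinearMap.range f).mkQ) w)) := by
      intro w
      induction w using TensorProduct.induction_on with
      | zero => simp
      | tmul i a => simp [hψ]
      | add u v hu hv => simp only [map_add, hu, hv]
    rw [hz, hcomm y, hx, map_zero]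
  -- so z = f a for some a
  obtain ⟨a, ha⟩ : z ∈ LinearMap.range f := by
    rwa [← Submodule.Quotient.mk_eq_zero]
  -- a ∈ I, by faithful flatness
  have haI : a ∈ I := by
    set φ : A' →ₗ[A] (A ⧸ I) ⊗[A] A' :=
      (TensorProduct.mk A (A ⧸ I) A') (Submodule.Quotient.mk 1) with hφ
    have hφψ : ∀ w : (↥I) ⊗[A] A', φ (ψ w) = 0 := by
      intro w
      induction w using TensorProduct.induction_on with
      | zero => simp
      | tmul i a' =>
        have h1 : (Submodule.Quotient.mk (1 : A) : A ⧸ I) ⊗ₜ[A] ((i : A) • a')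
            = ((i : A) • (Submodule.Quotient.mk (1 : A) : A ⧸ I)) ⊗ₜ[A] a' := by
          rw [TensorProduct.smul_tmul]
        have h2 : (i : A) • (Submodule.Quotient.mk (1 : A) : A ⧸ I) = 0 := by
          rw [← Submodule.Quotient.mk_smul, smul_eq_mul, mul_one, Submodule.Quotient.mk_eq_zero]
          exact i.2
        simp only [hψ, TensorProduct.lift.tmul, LinearMap.comp_apply, Submodule.subtype_apply,
          LinearMap.lsmul_apply, hφ, TensorProduct.mk_apply]
        rw [h1, h2, TensorProduct.zero_tmul]
      | add u v hu hv => simp only [map_add, hu, hv, add_zero]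
    have hφz : φ z = 0 := by rw [hz]; exact hφψ y
    have hφfa : φ (f a) = (Submodule.Quotient.mk a : A ⧸ I) ⊗ₜ[A] (1 : A') := by
      have h3 : f a = a • (1 : A') := by simp [hf, Algebra.smul_def]
      have h5 : (a • (Submodule.Quotient.mk (1 : A) : A ⧸ I))
          = (Submodule.Quotient.mk a : A ⧸ I) := by
        rw [← Submodule.Quotient.mk_smul, smul_eq_mul, mul_one]
      calc φ (f a) = (Submodule.Quotient.mk (1 : A) : A ⧸ I) ⊗ₜ[A] (a • (1 : A')) := by
            rw [h3]; rfl
        _ = (a • (Submodule.Quotient.mk (1 : A) : A ⧸ I)) ⊗ₜ[A] (1 : A') := by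
            rw [← TensorProduct.smul_tmul]
        _ = _ := by rw [h5]
    have hmk0 : (Submodule.Quotient.mk a : A ⧸ I) ⊗ₜ[A] (1 : A') = (0 : A ⧸ I) ⊗ₜ[A] (1 : A') := by
      rw [← hφfa, ha, hφz, TensorProduct.zero_tmul]
    have hinj2 := tmul_one_injective_of_faithfullyFlat A A' (A ⧸ I)
    have h4 : (Submodule.Quotient.mk a : A ⧸ I) = 0 := by
      have := hinj2 hmk0
      simpa using this
    exact (Submodule.Quotient.mk_eq_zero I).1 h4
  -- ψ is injective since A' is flat
  have hψinj : Function.Injective ψ := by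
    have h1 : Function.Injective (LinearMap.rTensor A' I.subtype) :=
      Module.Flat.iff_rTensor_injective'.1 inferInstance I
    have h2 : ψ = (TensorProduct.lid A A').toLinearMap.comp (LinearMap.rTensor A' I.subtype) := by
      apply TensorProduct.ext'
      intro i a'
      simp [hψ]
    rw [h2]
    exact (TensorProduct.lid A A').injective.comp h1
  -- y = ⟨a, haI⟩ ⊗ 1
  have hy : y = (⟨a, haI⟩ : ↥I) ⊗ₜ[A] (1 : A') := by
    apply hψinj
    rw [← hz, ← ha]
    simp [hψ, hf, Algebra.smul_def]
  rw [hy]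
  have h1 : (LinearMap.range f).mkQ (1 : A') = 0 := by
    rw [Submodule.mkQ_apply, Submodule.Quotient.mk_eq_zero]
    exact ⟨1, by simp [hf]⟩
  simp only [LinearMap.lTensor_tmul, h1, TensorProduct.tmul_zero]
end

section
/- Let A be a commutative ring and A' a faithfully flat commutative A-algebra. Then the A'-module (A'/A) ⊗_A A' is isomorphic to the cokernel of the map A' → A' ⊗_A A', x ↦ x ⊗ 1, and this cokernel is a flat A'-module. -/
open TensorProduct

/-- For a faithfully flat commutative `A`-algebra `A'`, the `A'`-module
`A' ⊗_A (A'/A)` is isomorphic to the cokernel of the `A'`-linear map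
`A' → A' ⊗_A A'`, `x ↦ x ⊗ 1`, and this cokernel is a flat `A'`-module. -/
theorem quotient_tensor_iso_coker_and_flat (A A' : Type) [CommRing A] [CommRing A']
    [Algebra A A'] [Module.FaithfullyFlat A A'] :
    Nonempty ((A' ⊗[A] (A' ⧸ LinearMap.range (Algebra.linearMap A A'))) ≃ₗ[A']
        ((A' ⊗[A] A') ⧸
          LinearMap.range (Algebra.TensorProduct.includeLeft (S := A') :
            A' →ₐ[A'] A' ⊗[A] A').toLinearMap)) ∧
    Module.Flat A' ((A' ⊗[A] A') ⧸
      LinearMap.range (Algebra.TensorProduct.includeLeft (S := A') :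
        A' →ₐ[A'] A' ⊗[A] A').toLinearMap) := by
  set N : Submodule A A' := LinearMap.range (Algebra.linearMap A A') with hN
  set P : Submodule A' (A' ⊗[A] A') :=
    LinearMap.range (Algebra.TensorProduct.includeLeft (S := A') :
      A' →ₐ[A'] A' ⊗[A] A').toLinearMap with hP
  -- the base-changed quotient map
  set f : A' ⊗[A] A' →ₗ[A'] A' ⊗[A] (A' ⧸ N) := N.mkQ.baseChange A' with hf
  have hcoe : (f : A' ⊗[A] A' → A' ⊗[A] (A' ⧸ N)) = N.mkQ.lTensor A' :=
    LinearMap.baseChange_eq_ltensor N.mkQ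
  have hfsurj : Function.Surjective f := by
    rw [hcoe]
    exact LinearMap.lTensor_surjective A' (Submodule.mkQ_surjective N)
  -- kernel of `f` is the range of `includeLeft`
  have hker : LinearMap.ker f = P := by
    have hex : Function.Exact (N.subtype.lTensor A') (N.mkQ.lTensor A') :=
      lTensor_exact A' (LinearMap.exact_subtype_mkQ N) (Submodule.mkQ_surjective N)
    have hran : ∀ w : A' ⊗[A] N, N.subtype.lTensor A' w ∈ P := by
      intro w
      induction w using TensorProduct.induction_on with
      | zero => simp
      | tmul x n =>
        obtain ⟨n, a, ha⟩ := n
        refine ⟨a • x, ?_⟩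
        simp only [AlgHom.toLinearMap_apply, Algebra.TensorProduct.includeLeft_apply]
        rw [LinearMap.lTensor_tmul]
        simp only [Submodule.coe_subtype]
        rw [← ha, TensorProduct.smul_tmul]
        simp [Algebra.linearMap_apply, Algebra.smul_def]
      | add u v hu hv =>
        rw [map_add]
        exact add_mem hu hv
    apply le_antisymm
    · intro z hz
      have hz' : ⇑(N.mkQ.lTensor A') z = 0 := by
        rw [← hcoe]; exact hz
      obtain ⟨w, hw⟩ := (hex z).mp hz'
      exact hw ▸ hran w
    · rintro z ⟨x, rfl⟩
      refine LinearMap.mem_ker.mpr ?_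
      have := (hex (x ⊗ₜ[A] (1 : A'))).mpr
        ⟨x ⊗ₜ ⟨1, ⟨1, by simp⟩⟩, by simp⟩
      simpa [hf, LinearMap.baseChange_tmul] using this
  constructor
  · -- the isomorphism
    refine ⟨?_⟩
    exact ((Submodule.quotEquivOfEq P (LinearMap.ker f) hker.symm) ≪≫ₗ
      f.quotKerEquivOfSurjective hfsurj).symm
  · -- flatness: the quotient is a retract of the flat `A'`-module `A' ⊗[A] A'`
    have hflat : Module.Flat A' (A' ⊗[A] A') := inferInstance
    -- the multiplication map
    set m : A' ⊗[A] A' →ₗ[A'] A' :=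
      LinearMap.liftBaseChange A' (LinearMap.id : A' →ₗ[A] A') with hm
    set g : A' ⊗[A] A' →ₗ[A'] A' ⊗[A] A' :=
      LinearMap.id - (Algebra.TensorProduct.includeLeft (S := A') :
        A' →ₐ[A'] A' ⊗[A] A').toLinearMap ∘ₗ m with hg
    have hgP : P ≤ LinearMap.ker g := by
      rintro z ⟨x, rfl⟩
      simp [hg, hm]
    set s : ((A' ⊗[A] A') ⧸ P) →ₗ[A'] A' ⊗[A] A' := P.liftQ g hgP with hs
    have hret : P.mkQ.comp s = LinearMap.id := by
      apply LinearMap.ext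
      intro z
      obtain ⟨w, rfl⟩ := Submodule.mkQ_surjective P z
      simp only [LinearMap.comp_apply, LinearMap.id_apply, hs, Submodule.mkQ_apply,
        Submodule.liftQ_apply]
      simp only [hg, LinearMap.sub_apply, LinearMap.id_apply, LinearMap.comp_apply, map_sub]
      have : P.mkQ ((Algebra.TensorProduct.includeLeft (S := A') :
          A' →ₐ[A'] A' ⊗[A] A').toLinearMap (m w)) = 0 := by
        rw [← LinearMap.mem_ker, Submodule.ker_mkQ]
        exact ⟨m w, rfl⟩
      rw [← Submodule.mkQ_apply, ← Submodule.mkQ_apply P w, map_sub, this, sub_zero]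
    exact Module.Flat.of_retract s P.mkQ hret
end

section
/- Let A be a commutative ring, M an A-module which is a retract of a free module A^(I) via an idempotent endomorphism e of A^(I), and C an A-linear abelian category with exact coproducts. Then M ⊗_A X is isomorphic to the image of the induced idempotent endomorphism of X^(I), and the functor X ↦ M ⊗_A X is exact. -/
open CategoryTheory Limits TensorProduct

/-- The structure of a module category over `A-Mod` on an abelian category `C`,
abstracting the tensor product `(M, X) ↦ M ⊗_A X` defined via presentations:
it comes with a unit isomorphism `A ⊗_A X ≅ X`, associativity isomorphisms,
is additive and right exact in each variable, and commutes with all colimits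
in the module variable. -/
structure ModAction (A : Type) [CommRing A] (C : Type u) [Category.{v} C] [Abelian C] where
  T : ModuleCat.{0} A ⥤ C ⥤ C
  unitIso : T.obj (ModuleCat.of A A) ≅ 𝟭 C
  assoc : ∀ M N : ModuleCat.{0} A,
    T.obj N ⋙ T.obj M ≅ T.obj (ModuleCat.of A (TensorProduct A M N))
  additiveX : ∀ M, (T.obj M).Additive
  additiveM : ∀ X : C, (T.flip.obj X).Additive
  rightExactX : ∀ M, PreservesFiniteColimits (T.obj M)
  rightExactM : ∀ X : C, PreservesFiniteColimits (T.flip.obj X)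
  colimM : ∀ X : C, PreservesColimits (T.flip.obj X)
section Aux

universe v₁ u₁ v₂ u₂

/-- A retract (in the functor category) of a functor preserving finite limits
preserves finite limits. -/
lemma preservesFiniteLimits_of_retract {C : Type u₁} [Category.{v₁} C]
    {D : Type u₂} [Category.{v₂} D] {F G : C ⥤ D} (σ : F ⟶ G) (ρ : G ⟶ F)
    (hσρ : σ ≫ ρ = 𝟙 F) [PreservesFiniteLimits G] : PreservesFiniteLimits F := by
  have happ : ∀ Z : C, σ.app Z ≫ ρ.app Z = 𝟙 (F.obj Z) := fun Z => by
    have := congrArg (fun (α : F ⟶ F) => α.app Z) hσρ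
    simpa using this
  constructor
  intro J _ _
  constructor
  intro K
  constructor
  intro c hc
  obtain ⟨hGc⟩ := PreservesLimit.preserves (F := G) hc
  refine ⟨IsLimit.mk
    (fun t => hGc.lift ((Cones.postcompose (Functor.whiskerLeft K σ)).obj t) ≫ ρ.app c.pt)
    (fun t j => ?_) (fun t m hm => ?_)⟩
  · have h := hGc.fac ((Cones.postcompose (Functor.whiskerLeft K σ)).obj t) j
    dsimp at h ⊢
    erw [Category.assoc, ← ρ.naturality, ← Category.assoc, h, Category.assoc,
      happ, Category.comp_id]
  · have hmono : m ≫ σ.app c.pt =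
        hGc.lift ((Cones.postcompose (Functor.whiskerLeft K σ)).obj t) := by
      apply hGc.uniq ((Cones.postcompose (Functor.whiskerLeft K σ)).obj t)
      intro j
      dsimp
      erw [Category.assoc, ← σ.naturality, ← Category.assoc]
      have := hm j
      dsimp at this
      erw [this]
      rfl
    calc m = m ≫ σ.app c.pt ≫ ρ.app c.pt := by rw [happ]; simp
    _ = _ := by rw [← Category.assoc, hmono]

end Aux

/-- If `M` is an `A`-module which is a retract of a free module `A^{(I)}` via an
idempotent endomorphism `e`, and `C` is an `A`-linear abelian category with exact
coproducts, then `A^{(I)} ⊗_A X ≅ X^{(I)}`, `M ⊗_A X` is the image of the induced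
idempotent endomorphism of `A^{(I)} ⊗_A X ≅ X^{(I)}`, and `X ↦ M ⊗_A X` is exact. -/

theorem retract_tensor_image_and_exact (A : Type) [CommRing A]
    (C : Type u) [Category.{v} C] [Abelian C] [Linear A C]
    [HasCoproducts.{0} C] (hexcoprod : ∀ ι : Type, PreservesFiniteLimits
      (colim (J := Discrete ι) (C := C)))
    (act : ModAction A C)
    (ι : Type) (M : Type) [AddCommGroup M] [Module A M]
    (e : (ι →₀ A) →ₗ[A] (ι →₀ A)) (he : e ∘ₗ e = e)
    (s : M →ₗ[A] (ι →₀ A)) (r : (ι →₀ A) →ₗ[A] M)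
    (hrs : r ∘ₗ s = LinearMap.id) (hsr : s ∘ₗ r = e) (X : C) :
    Nonempty ((act.T.obj (ModuleCat.of A (ι →₀ A))).obj X ≅ ∐ (fun _ : ι => X)) ∧
    Nonempty ((act.T.obj (ModuleCat.of A M)).obj X ≅
        Limits.image ((act.T.map (ModuleCat.ofHom e)).app X)) ∧
    Nonempty (PreservesFiniteLimits (act.T.obj (ModuleCat.of A M))) ∧
    Nonempty (PreservesFiniteColimits (act.T.obj (ModuleCat.of A M))) := by
  -- notation
  set G := act.T.obj (ModuleCat.of A (ι →₀ A)) with hG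
  -- the free module as a coproduct in `ModuleCat A`
  let c0 : Cofan (fun _ : ι => ModuleCat.of A A) :=
    Cofan.mk (ModuleCat.of A (ι →₀ A)) (fun i => ModuleCat.ofHom (Finsupp.lsingle i))
  have hc0 : IsColimit c0 := by
    refine mkCofanColimit c0
      (fun t => ModuleCat.ofHom ((Finsupp.lsum A) (fun i => (t.inj i).hom))) ?_ ?_
    · intro t j
      apply ModuleCat.hom_ext; apply LinearMap.ext
      intro a
      show ((Finsupp.lsum A) fun i => (t.inj i).hom) ((Finsupp.lsingle j) a)
        = (t.inj j).hom a
      simp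
    · intro t m hm
      apply ModuleCat.hom_ext; apply LinearMap.ext
      intro x
      induction x using Finsupp.induction_linear with
      | zero => simp
      | add f g hf hg => simp [map_add, hf, hg]
      | single i a =>
          have h1 := congrArg (fun (φ : ModuleCat.of A A ⟶ t.pt) => φ.hom a) (hm i)
          have h2 : m.hom ((Finsupp.lsingle i) a) = (t.inj i).hom a := h1
          have h3 : ((Finsupp.lsum A) fun i => (t.inj i).hom)
              (Finsupp.single i a) = (t.inj i).hom a := by simp
          exact h2.trans h3.symm
  -- the colimit cocones in `C`
  have hPC : ∀ Y : C, PreservesColimits (act.T.flip.obj Y) := act.colimM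
  let δ : ∀ Y : C, (Functor.const (Discrete ι)).obj Y ≅
      Discrete.functor (fun _ : ι => ModuleCat.of A A) ⋙ act.T.flip.obj Y :=
    fun Y => Discrete.natIso (fun _ => act.unitIso.symm.app Y)
  let cc : ∀ Y : C, Cocone ((Functor.const (Discrete ι)).obj Y) := fun Y =>
    (Cocone.precompose (δ Y).hom).obj ((act.T.flip.obj Y).mapCocone c0)
  have hcc : ∀ Y : C, IsColimit (cc Y) := fun Y => by
    haveI := hPC Y
    haveI : PreservesColimitsOfSize.{0, 0} (act.T.flip.obj Y) :=
      preservesColimitsOfSize_shrink _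
    exact (IsColimit.precomposeHomEquiv (δ Y) _).symm
      (isColimitOfPreserves (act.T.flip.obj Y) hc0)
  -- the natural isomorphism `const ⋙ colim ≅ G`
  let θ : Functor.const (Discrete ι) ⋙ colim (J := Discrete ι) (C := C) ≅ G := by
    refine NatIso.ofComponents
      (fun Y => colimit.isoColimitCocone ⟨cc Y, hcc Y⟩) ?_
    intro Y Z f
    apply colimit.hom_ext
    intro j
    simp only [Functor.comp_obj, Functor.comp_map, colim_map]
    rw [ι_colimMap_assoc, colimit.isoColimitCocone_ι_hom,
      colimit.isoColimitCocone_ι_hom_assoc]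
    show f ≫ (cc Z).ι.app j = (cc Y).ι.app j ≫ G.map f
    show f ≫ ((δ Z).hom.app j ≫ (act.T.flip.obj Z).map (c0.inj j.as)) =
      ((δ Y).hom.app j ≫ (act.T.flip.obj Y).map (c0.inj j.as)) ≫ G.map f
    show f ≫ act.unitIso.inv.app Z ≫
        (act.T.map (ModuleCat.ofHom (Finsupp.lsingle j.as))).app Z =
      (act.unitIso.inv.app Y ≫
        (act.T.map (ModuleCat.ofHom (Finsupp.lsingle j.as))).app Y) ≫
        (act.T.obj (ModuleCat.of A (ι →₀ A))).map f
    rw [Category.assoc, ← (act.T.map (ModuleCat.ofHom (Finsupp.lsingle j.as))).naturality f]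
    simp only [← Category.assoc]
    congr 1
    exact act.unitIso.inv.naturality f
  -- `G` preserves finite limits
  haveI := hexcoprod ι
  haveI : PreservesLimitsOfSize.{0, 0} (Functor.const (Discrete ι) : C ⥤ Discrete ι ⥤ C) :=
    (colimConstAdj (J := Discrete ι) (C := C)).rightAdjoint_preservesLimits
  haveI : PreservesFiniteLimits (Functor.const (Discrete ι) : C ⥤ Discrete ι ⥤ C) :=
    inferInstance
  haveI hGfl : PreservesFiniteLimits G := by
    have := comp_preservesFiniteLimits (Functor.const (Discrete ι))
      (colim (J := Discrete ι) (C := C))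
    exact preservesFiniteLimits_of_natIso θ
  -- the retraction data
  let σ : act.T.obj (ModuleCat.of A M) ⟶ G := act.T.map (ModuleCat.ofHom s)
  let ρ : G ⟶ act.T.obj (ModuleCat.of A M) := act.T.map (ModuleCat.ofHom r)
  have hσρ : σ ≫ ρ = 𝟙 (act.T.obj (ModuleCat.of A M)) := by
    rw [show σ ≫ ρ = act.T.map (ModuleCat.ofHom s ≫ ModuleCat.ofHom r) by
      rw [act.T.map_comp]]
    rw [show (ModuleCat.ofHom s ≫ ModuleCat.ofHom r : ModuleCat.of A M ⟶ ModuleCat.of A M)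
        = 𝟙 (ModuleCat.of A M) by
      apply ModuleCat.hom_ext; apply LinearMap.ext; intro x
      have := congrArg (fun φ => φ x) hrs
      simpa [ModuleCat.ofHom] using this]
    rw [act.T.map_id]
  have hε : (act.T.map (ModuleCat.ofHom e)).app X = ρ.app X ≫ σ.app X := by
    rw [show (ModuleCat.ofHom e : ModuleCat.of A (ι →₀ A) ⟶ ModuleCat.of A (ι →₀ A))
        = ModuleCat.ofHom r ≫ ModuleCat.ofHom s by
      apply ModuleCat.hom_ext; apply LinearMap.ext; intro x
      have := congrArg (fun φ => φ x) hsr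
      exact this.symm]
    rw [act.T.map_comp]
    rfl
  have happX : σ.app X ≫ ρ.app X = 𝟙 _ := by
    have := congrArg (fun (α : act.T.obj (ModuleCat.of A M) ⟶ act.T.obj (ModuleCat.of A M)) =>
      α.app X) hσρ
    simpa using this
  haveI : IsSplitMono (σ.app X) := IsSplitMono.mk' ⟨ρ.app X, happX⟩
  haveI : IsSplitEpi (ρ.app X) := IsSplitEpi.mk' ⟨σ.app X, happX⟩
  haveI : StrongEpi (ρ.app X) := strongEpi_of_epi _
  refine ⟨⟨?_⟩, ⟨?_⟩, ⟨?_⟩, ⟨act.rightExactX _⟩⟩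
  · exact (θ.app X).symm ≪≫
      HasColimit.isoOfNatIso (Discrete.natIso (fun _ => Iso.refl X))
  · exact image.isoStrongEpiMono (ρ.app X) (σ.app X) hε.symm
  · exact preservesFiniteLimits_of_retract σ ρ hσρ
end

section
/- Let A be a commutative ring, C an A-linear abelian category with exact filtered colimits, and A' an A-algebra in A-Mod which is faithfully flat over A. Then the functor X ↦ A' ⊗_A X : C → C is exact and faithful. -/
open CategoryTheory Limits TensorProduct

section Algebra
variable (A : Type) [CommRing A] (A' : Type) [CommRing A'] [Algebra A A']
  [Module.FaithfullyFlat A A']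

lemma one_tmul_injective (M : Type) [AddCommGroup M] [Module A M] :
    Function.Injective (fun m : M => (1 : A') ⊗ₜ[A] m) := by
  intro m m' h
  have h' : (1 : A') ⊗ₜ[A] m = (1 : A') ⊗ₜ[A] m' := h
  rw [← sub_eq_zero]
  by_contra hne
  set m0 := m - m' with hm0
  have h0 : (1 : A') ⊗ₜ[A] m0 = 0 := by
    rw [hm0, TensorProduct.tmul_sub, h', sub_self]
  set N := Submodule.span A ({m0} : Set M) with hN
  have hinj : Function.Injective (LinearMap.lTensor A' N.subtype) :=
    Module.Flat.lTensor_preserves_injective_linearMap _ N.injective_subtype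
  have hz : (1 : A') ⊗ₜ[A] (⟨m0, Submodule.mem_span_singleton_self m0⟩ : N) = 0 := by
    apply hinj
    simpa [LinearMap.lTensor_tmul] using h0
  have hsub : Subsingleton (A' ⊗[A] N) := by
    constructor
    have key : ∀ x : A' ⊗[A] N, x = 0 := by
      intro x
      induction x using TensorProduct.induction_on with
      | zero => rfl
      | tmul a n =>
        obtain ⟨c, hc⟩ := Submodule.mem_span_singleton.1 n.2
        have hn : n = c • (⟨m0, Submodule.mem_span_singleton_self m0⟩ : N) := by
          ext; simpa using hc.symm
        rw [hn, TensorProduct.tmul_smul]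
        have : a ⊗ₜ[A] (⟨m0, Submodule.mem_span_singleton_self m0⟩ : N)
            = a • ((1 : A') ⊗ₜ[A] (⟨m0, Submodule.mem_span_singleton_self m0⟩ : N)) := by
          rw [TensorProduct.smul_tmul', smul_eq_mul, mul_one]
        rw [this, hz, smul_zero, smul_zero]
      | add x y hx hy => rw [hx, hy, add_zero]
    intro x y; rw [key x, key y]
  have := Module.FaithfullyFlat.lTensor_reflects_triviality A A' N
  have h00 : (⟨m0, Submodule.mem_span_singleton_self m0⟩ : N) = 0 := Subsingleton.elim _ _
  exact hne (by simpa using congrArg Subtype.val h00)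

lemma unit_injective : Function.Injective (Algebra.linearMap A A') := by
  intro a b h
  have := one_tmul_injective A A' A
  apply this
  apply (TensorProduct.rid A A').injective
  simp only [TensorProduct.rid_tmul]
  simpa [Algebra.algebraMap_eq_smul_one, Algebra.linearMap_apply] using h

lemma mem_of_unit_mem_smul (I : Ideal A) (a : A)
    (h : algebraMap A A' a ∈ (I • (⊤ : Submodule A A') : Submodule A A')) : a ∈ I := by
  have hinj := one_tmul_injective A A' (A ⧸ I)
  have he : (TensorProduct.tensorQuotEquivQuotSMul A' I)
      ((1 : A') ⊗ₜ[A] (Ideal.Quotient.mk I a : A ⧸ I)) =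
      Submodule.Quotient.mk (a • (1 : A')) := by
    simp [TensorProduct.tensorQuotEquivQuotSMul, TensorProduct.quotTensorEquivQuotSMul_mk_tmul]
  have h0 : (1 : A') ⊗ₜ[A] (Ideal.Quotient.mk I a : A ⧸ I) = 0 := by
    apply (TensorProduct.tensorQuotEquivQuotSMul A' I).injective
    rw [he, map_zero]
    rw [Submodule.Quotient.mk_eq_zero]
    simpa [Algebra.algebraMap_eq_smul_one] using h
  have h1 : (fun m : A ⧸ I => (1 : A') ⊗ₜ[A] m) (Ideal.Quotient.mk I a)
      = (fun m : A ⧸ I => (1 : A') ⊗ₜ[A] m) (0 : A ⧸ I) := by simpa using h0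
  have := hinj h1
  rwa [Ideal.Quotient.eq_zero_iff_mem] at this

/-- The cokernel of `A → A'`. -/
abbrev QMod : Type := A' ⧸ (LinearMap.range (Algebra.linearMap A A'))

noncomputable abbrev piQ : A' →ₗ[A] QMod A A' :=
  (LinearMap.range (Algebra.linearMap A A')).mkQ

lemma flat_QMod : Module.Flat A (QMod A A') := by
  rw [Module.Flat.iff_rTensor_injective']
  intro I
  rw [injective_iff_map_eq_zero]
  intro x hx
  obtain ⟨y, hy⟩ := LinearMap.lTensor_surjective (R := A) (g := piQ A A') (I : Type)
    (Submodule.mkQ_surjective _) x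
  set z := LinearMap.rTensor A' I.subtype y with hz
  have hcomm : LinearMap.lTensor A (piQ A A') z = LinearMap.rTensor (QMod A A') I.subtype x := by
    rw [hz, ← hy]
    rw [← LinearMap.comp_apply, ← LinearMap.comp_apply,
      LinearMap.lTensor_comp_rTensor, LinearMap.rTensor_comp_lTensor]
  set t := TensorProduct.lid A A' z with ht
  have hnat : ∀ w : A ⊗[A] A', piQ A A' (TensorProduct.lid A A' w)
      = TensorProduct.lid A (QMod A A') (LinearMap.lTensor A (piQ A A') w) := by
    intro w
    induction w using TensorProduct.induction_on with
    | zero => simp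
    | tmul a s => simp
    | add u v hu hv => simp [map_add, hu, hv]
  have hπt : piQ A A' t = 0 := by
    rw [ht, hnat, hcomm, hx, map_zero]
  have htmem : t ∈ LinearMap.range (Algebra.linearMap A A') := by
    rwa [← Submodule.Quotient.mk_eq_zero]
  obtain ⟨a, ha⟩ := htmem
  have hgen : ∀ w : I ⊗[A] A',
      TensorProduct.lid A A' (LinearMap.rTensor A' I.subtype w)
        ∈ (I • (⊤ : Submodule A A') : Submodule A A') := by
    intro w
    induction w using TensorProduct.induction_on with
    | zero => simp
    | tmul i s =>
      simpa using Submodule.smul_mem_smul i.2 (Submodule.mem_top (x := s))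
    | add u v hu hv => rw [map_add, map_add]; exact Submodule.add_mem _ hu hv
  have htI : t ∈ (I • (⊤ : Submodule A A') : Submodule A A') := by
    rw [ht, hz]; exact hgen y
  have haI : a ∈ I := mem_of_unit_mem_smul A A' I a
    (by rw [show algebraMap A A' a = t from ha]; exact htI)
  have hy0 : y = (⟨a, haI⟩ : I) ⊗ₜ[A] (1 : A') := by
    have hflat : Function.Injective (LinearMap.rTensor A' I.subtype) :=
      (Module.Flat.iff_rTensor_injective' (R := A) (M := A')).1 inferInstance I
    apply hflat
    rw [← hz, LinearMap.rTensor_tmul]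
    apply (TensorProduct.lid A A').injective
    rw [← ht]
    simpa [Algebra.algebraMap_eq_smul_one] using ha.symm
  rw [← hy, hy0, LinearMap.lTensor_tmul]
  have : piQ A A' 1 = 0 := by
    rw [Submodule.mkQ_apply, Submodule.Quotient.mk_eq_zero]
    exact ⟨1, by simp⟩
  rw [this, TensorProduct.tmul_zero]

end Algebra
section LazardCat
variable (A : Type) [CommRing A]

/-- Category of finite free covers of a module `Q`. -/
structure FreeCover (Q : Type) [AddCommGroup Q] [Module A Q] where
  n : ℕ
  u : (Fin n → A) →ₗ[A] Q

variable {Q : Type} [AddCommGroup Q] [Module A Q]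

instance : Category (FreeCover A Q) where
  Hom x y := {g : (Fin x.n → A) →ₗ[A] (Fin y.n → A) // y.u ∘ₗ g = x.u}
  id x := ⟨LinearMap.id, LinearMap.comp_id _⟩
  comp f g := ⟨g.1 ∘ₗ f.1, by rw [← LinearMap.comp_assoc, g.2, f.2]⟩
  id_comp f := Subtype.ext (LinearMap.comp_id _)
  comp_id f := Subtype.ext (LinearMap.id_comp _)
  assoc f g h := Subtype.ext (LinearMap.comp_assoc _ _ _).symm

lemma FreeCover.hom_u {x y : FreeCover A Q} (g : x ⟶ y) (p : Fin x.n → A) :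
    y.u (g.1 p) = x.u p := by
  conv_rhs => rw [← g.2]
  rfl

/-- Extension by zero into the first block. -/
def inlMap (n m : ℕ) : (Fin n → A) →ₗ[A] (Fin (n + m) → A) where
  toFun p := fun i => if h : (i : ℕ) < n then p ⟨i, h⟩ else 0
  map_add' p q := by funext i; by_cases h : (i : ℕ) < n <;> simp [h]
  map_smul' a p := by funext i; by_cases h : (i : ℕ) < n <;> simp [h]

/-- Extension by zero into the second block. -/
def inrMap (n m : ℕ) : (Fin m → A) →ₗ[A] (Fin (n + m) → A) where
  toFun p := fun i => if h : (i : ℕ) < n then 0 else p ⟨(i : ℕ) - n, by omega⟩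
  map_add' p q := by funext i; by_cases h : (i : ℕ) < n <;> simp [h]
  map_smul' a p := by funext i; by_cases h : (i : ℕ) < n <;> simp [h]

/-- Restriction to the first block. -/
def fstMap (n m : ℕ) : (Fin (n + m) → A) →ₗ[A] (Fin n → A) :=
  LinearMap.funLeft A A (Fin.castAdd m)

/-- Restriction to the second block. -/
def sndMap (n m : ℕ) : (Fin (n + m) → A) →ₗ[A] (Fin m → A) :=
  LinearMap.funLeft A A (Fin.natAdd n)

lemma fstMap_inlMap (n m : ℕ) (p : Fin n → A) : fstMap A n m (inlMap A n m p) = p := by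
  funext i
  simp only [fstMap, LinearMap.funLeft_apply, inlMap, LinearMap.coe_mk, AddHom.coe_mk]
  rw [dif_pos (by simp [Fin.is_lt])]
  exact congrArg p (Fin.ext (by simp))

lemma sndMap_inlMap (n m : ℕ) (p : Fin n → A) : sndMap A n m (inlMap A n m p) = 0 := by
  funext i
  simp only [sndMap, LinearMap.funLeft_apply, inlMap, LinearMap.coe_mk, AddHom.coe_mk]
  rw [dif_neg (by simp)]
  rfl

lemma fstMap_inrMap (n m : ℕ) (p : Fin m → A) : fstMap A n m (inrMap A n m p) = 0 := by
  funext i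
  simp only [fstMap, LinearMap.funLeft_apply, inrMap, LinearMap.coe_mk, AddHom.coe_mk]
  rw [dif_pos (by simp [Fin.is_lt])]
  rfl

lemma sndMap_inrMap (n m : ℕ) (p : Fin m → A) : sndMap A n m (inrMap A n m p) = p := by
  funext i
  simp only [sndMap, LinearMap.funLeft_apply, inrMap, LinearMap.coe_mk, AddHom.coe_mk]
  rw [dif_neg (by simp)]
  exact congrArg p (Fin.ext (by simp))

/-- The coproduct of two free covers. -/
def supCover (x y : FreeCover A Q) : FreeCover A Q :=
  ⟨x.n + y.n, x.u ∘ₗ fstMap A x.n y.n + y.u ∘ₗ sndMap A x.n y.n⟩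

def supInl (x y : FreeCover A Q) : x ⟶ supCover A x y :=
  ⟨inlMap A x.n y.n, by
    ext p
    simp only [supCover, LinearMap.comp_apply, LinearMap.add_apply]
    rw [fstMap_inlMap, sndMap_inlMap]
    simp⟩

def supInr (x y : FreeCover A Q) : y ⟶ supCover A x y :=
  ⟨inrMap A x.n y.n, by
    ext p
    simp only [supCover, LinearMap.comp_apply, LinearMap.add_apply]
    rw [fstMap_inrMap, sndMap_inrMap]
    simp⟩

/-- A finsupp-type free cover converted to a `Fin`-indexed one. -/
noncomputable def finsuppEquivFun (κ : Type) [Fintype κ] :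
    (κ →₀ A) ≃ₗ[A] (Fin (Fintype.card κ) → A) :=
  (Finsupp.linearEquivFunOnFinite A A κ).trans
    (LinearEquiv.funCongrLeft A A (Fintype.equivFin κ).symm)

variable [Module.Flat A Q]

/-- An object coequalizing two parallel maps, via the equational criterion for flatness. -/
lemma exists_coeq {x y : FreeCover A Q} (f g : x ⟶ y) :
    ∃ (z : FreeCover A Q) (h : y ⟶ z), f ≫ h = g ≫ h := by
  have hd : y.u ∘ₗ (f.1 - g.1) = 0 := by
    rw [LinearMap.comp_sub, f.2, g.2, sub_self]
  obtain ⟨κ, a, yy, hyu, ha⟩ :=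
    Module.Flat.exists_factorization_of_comp_eq_zero_of_free (f := f.1 - g.1) (x := y.u) hd
  let e := finsuppEquivFun A (Fin κ)
  refine ⟨⟨Fintype.card (Fin κ), yy ∘ₗ (e.symm : _ →ₗ[A] _)⟩,
    ⟨(e : _ →ₗ[A] _) ∘ₗ a, ?_⟩, ?_⟩
  · ext p
    simp only [LinearMap.comp_apply, LinearEquiv.coe_coe, LinearEquiv.symm_apply_apply]
    rw [hyu]; rfl
  · apply Subtype.ext
    apply LinearMap.ext
    intro p
    have h1 : a (f.1 p) - a (g.1 p) = 0 := by
      have := LinearMap.congr_fun ha p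
      simpa using this
    rw [sub_eq_zero] at h1
    change e.toLinearMap (a (f.1 p)) = e.toLinearMap (a (g.1 p))
    rw [h1]

instance : IsFilteredOrEmpty (FreeCover A Q) where
  cocone_objs x y := ⟨supCover A x y, supInl A x y, supInr A x y, trivial⟩
  cocone_maps x y f g := exists_coeq A f g

instance : IsFiltered (FreeCover A Q) where
  nonempty := ⟨⟨0, 0⟩⟩

end LazardCat
section Ediagram
variable (A : Type) [CommRing A] (A' : Type) [CommRing A'] [Algebra A A']
  [Module.FaithfullyFlat A A']

instance : Module.Flat A (QMod A A') := flat_QMod A A'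

/-- The pullback of a free cover of `Q` along `A' → Q`. -/
noncomputable def Esub (x : FreeCover A (QMod A A')) : Submodule A (A' × (Fin x.n → A)) :=
  LinearMap.ker ((piQ A A') ∘ₗ LinearMap.fst A A' (Fin x.n → A)
    - x.u ∘ₗ LinearMap.snd A A' (Fin x.n → A))

lemma mem_Esub {x : FreeCover A (QMod A A')} (t : A') (p : Fin x.n → A) :
    (t, p) ∈ Esub A A' x ↔ piQ A A' t = x.u p := by
  simp [Esub, LinearMap.mem_ker, sub_eq_zero]

lemma Esub_prop {x : FreeCover A (QMod A A')} (e : Esub A A' x) :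
    piQ A A' e.1.1 = x.u e.1.2 := by
  have h := e.2
  rw [show (e : A' × (Fin x.n → A)) = (e.1.1, e.1.2) from rfl, mem_Esub] at h
  exact h

noncomputable def EsubMap {x y : FreeCover A (QMod A A')} (g : x ⟶ y) :
    Esub A A' x →ₗ[A] Esub A A' y :=
  LinearMap.restrict (LinearMap.prodMap LinearMap.id g.1) (p := Esub A A' x)
    (q := Esub A A' y) (fun e he => by
      have h : piQ A A' e.1 = x.u e.2 := by
        rw [show e = (e.1, e.2) from rfl, mem_Esub] at he; exact he
      rw [show (LinearMap.prodMap LinearMap.id g.1) e = (e.1, g.1 e.2) from rfl,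
        mem_Esub, h, FreeCover.hom_u])

lemma EsubMap_val {x y : FreeCover A (QMod A A')} (g : x ⟶ y) (e : Esub A A' x) :
    (EsubMap A A' g e : A' × (Fin y.n → A)) = (e.1.1, g.1 e.1.2) := rfl

/-- The filtered diagram of pullbacks, with colimit `A'`. -/
noncomputable def Ediag : FreeCover A (QMod A A') ⥤ ModuleCat.{0} A where
  obj x := ModuleCat.of A (Esub A A' x)
  map g := ModuleCat.ofHom (EsubMap A A' g)
  map_id x := by
    ext e
    all_goals rfl
  map_comp f g := by
    ext e
    all_goals rfl

/-- The cocone over `Ediag` with apex `A'`. -/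
noncomputable def Econe : Cocone (Ediag A A') where
  pt := ModuleCat.of A A'
  ι :=
    { app := fun x => ModuleCat.ofHom ((LinearMap.fst A A' (Fin x.n → A)) ∘ₗ (Esub A A' x).subtype)
      naturality := fun x y g => by
        ext e
        rfl }

lemma Econe_app {x : FreeCover A (QMod A A')} (e : Esub A A' x) :
    (Econe A A').ι.app x e = e.1.1 := rfl

/-- The one-dimensional cover hitting a given element of `Q`. -/
noncomputable def ob1 (q : QMod A A') : FreeCover A (QMod A A') :=
  ⟨1, (LinearMap.proj (0 : Fin 1)).smulRight q⟩

noncomputable def elt (t : A') : Esub A A' (ob1 A A' (piQ A A' t)) :=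
  ⟨(t, fun _ => 1), by
    rw [mem_Esub]
    show piQ A A' t = (1 : A) • piQ A A' t
    rw [one_smul]⟩

/-- The cocone legs as plain linear maps into the cocone point. -/
noncomputable def app' (s : Cocone (Ediag A A')) (x : FreeCover A (QMod A A')) :
    Esub A A' x →ₗ[A] ↑s.pt := (s.ι.app x).hom

lemma ι_kill (s : Cocone (Ediag A A')) (x : FreeCover A (QMod A A'))
    (p : Fin x.n → A) (hp : x.u p = 0) (hm : (0, p) ∈ Esub A A' x) :
    app' A A' s x ⟨(0, p), hm⟩ = 0 := by
  obtain ⟨κ, a, yy, hyu, ha⟩ :=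
    Module.Flat.exists_factorization_of_apply_eq_zero_of_free (f := p) (x := x.u) hp
  let e := finsuppEquivFun A (Fin κ)
  let z : FreeCover A (QMod A A') := ⟨Fintype.card (Fin κ), yy ∘ₗ (e.symm : _ →ₗ[A] _)⟩
  let g : x ⟶ z := ⟨e.toLinearMap ∘ₗ a, by
    apply LinearMap.ext
    intro q
    show yy (e.symm (e (a q))) = x.u q
    rw [LinearEquiv.symm_apply_apply, hyu]
    rfl⟩
  have happ : app' A A' s x ⟨(0, p), hm⟩ = app' A A' s z (EsubMap A A' g ⟨(0, p), hm⟩) :=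
    (ConcreteCategory.congr_hom (s.w g) ⟨(0, p), hm⟩).symm
  rw [happ]
  have h0 : EsubMap A A' g ⟨(0, p), hm⟩ = 0 := by
    apply Subtype.ext
    rw [EsubMap_val]
    show ((0 : A'), (e.toLinearMap ∘ₗ a) p) = ((0 : A'), 0)
    have : a p = 0 := ha
    simp [this]
  rw [h0, map_zero]

lemma key_claim (s : Cocone (Ediag A A')) (x : FreeCover A (QMod A A'))
    (e : Esub A A' x) :
    app' A A' s x e = app' A A' s (ob1 A A' (piQ A A' e.1.1)) (elt A A' e.1.1) := by
  set t := e.1.1 with htdef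
  set y := ob1 A A' (piQ A A' t) with hydef
  set j := supCover A x y with hjdef
  have h1 : app' A A' s x e = app' A A' s j (EsubMap A A' (supInl A x y) e) :=
    (ConcreteCategory.congr_hom (s.w (supInl A x y)) e).symm
  have h2 : app' A A' s y (elt A A' t) = app' A A' s j (EsubMap A A' (supInr A x y) (elt A A' t)) :=
    (ConcreteCategory.congr_hom (s.w (supInr A x y)) (elt A A' t)).symm
  rw [h1, h2]
  set d := EsubMap A A' (supInl A x y) e - EsubMap A A' (supInr A x y) (elt A A' t) with hd
  set q : Fin j.n → A := inlMap A x.n y.n e.1.2 - inrMap A x.n y.n (fun _ => 1) with hq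
  have hjq : j.u q = 0 := by
    rw [show j.u q = j.u (inlMap A x.n y.n e.1.2) - j.u (inrMap A x.n y.n (fun _ => 1)) from map_sub j.u _ _]
    have hl : j.u (inlMap A x.n y.n e.1.2) = x.u e.1.2 := by
      show (x.u ∘ₗ fstMap A x.n y.n + y.u ∘ₗ sndMap A x.n y.n) _ = _
      simp only [LinearMap.add_apply, LinearMap.comp_apply]
      rw [fstMap_inlMap, sndMap_inlMap, map_zero, add_zero]
    have hr : j.u (inrMap A x.n y.n (fun _ => 1)) = piQ A A' t := by
      show (x.u ∘ₗ fstMap A x.n y.n + y.u ∘ₗ sndMap A x.n y.n) _ = _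
      simp only [LinearMap.add_apply, LinearMap.comp_apply]
      rw [fstMap_inrMap, sndMap_inrMap, map_zero, zero_add]
      show (1 : A) • piQ A A' t = piQ A A' t
      rw [one_smul]
    rw [hl, hr, Esub_prop, sub_self]
  have hmem : ((0 : A'), q) ∈ Esub A A' j := by
    rw [mem_Esub, hjq, map_zero]
  have hdeq : d = ⟨((0 : A'), q), hmem⟩ := by
    apply Subtype.ext
    rw [hd]
    show (EsubMap A A' (supInl A x y) e : A' × (Fin j.n → A)) -
      (EsubMap A A' (supInr A x y) (elt A A' t) : A' × (Fin j.n → A)) = ((0 : A'), q)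
    rw [EsubMap_val, EsubMap_val]
    apply Prod.ext
    · show t - t = (0 : A')
      rw [sub_self]
    · exact hq.symm
  have hz : app' A A' s j d = 0 := by rw [hdeq]; exact ι_kill A A' s j q hjq hmem
  rw [hd, map_sub, sub_eq_zero] at hz
  exact hz

noncomputable def Edesc (s : Cocone (Ediag A A')) : A' →ₗ[A] ↑s.pt where
  toFun t := app' A A' s (ob1 A A' (piQ A A' t)) (elt A A' t)
  map_add' t t' := by
    show app' A A' s (ob1 A A' (piQ A A' (t + t'))) (elt A A' (t + t'))
      = app' A A' s (ob1 A A' (piQ A A' t)) (elt A A' t)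
        + app' A A' s (ob1 A A' (piQ A A' t')) (elt A A' t')
    set x := ob1 A A' (piQ A A' t) with hx
    set y := ob1 A A' (piQ A A' t') with hy
    set j := supCover A x y with hj
    set E1 := EsubMap A A' (supInl A x y) (elt A A' t) with hE1
    set E2 := EsubMap A A' (supInr A x y) (elt A A' t') with hE2
    have hkey := key_claim A A' s j (E1 + E2)
    have hval : ((E1 + E2 : Esub A A' j) : A' × (Fin j.n → A)).1 = t + t' := by
      show ((E1 : A' × (Fin j.n → A)) + (E2 : A' × (Fin j.n → A))).1 = t + t'
      rw [hE1, hE2, EsubMap_val, EsubMap_val]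
      rfl
    rw [hval] at hkey
    have h1 : app' A A' s j E1 = app' A A' s x (elt A A' t) :=
      ConcreteCategory.congr_hom (s.w (supInl A x y)) (elt A A' t)
    have h2 : app' A A' s j E2 = app' A A' s y (elt A A' t') :=
      ConcreteCategory.congr_hom (s.w (supInr A x y)) (elt A A' t')
    rw [← hkey, map_add, h1, h2]
  map_smul' a t := by
    simp only [RingHom.id_apply]
    show app' A A' s (ob1 A A' (piQ A A' (a • t))) (elt A A' (a • t))
      = a • app' A A' s (ob1 A A' (piQ A A' t)) (elt A A' t)
    have hkey := key_claim A A' s (ob1 A A' (piQ A A' t)) (a • elt A A' t)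
    have hval : ((a • elt A A' t : Esub A A' (ob1 A A' (piQ A A' t)))
        : A' × (Fin (ob1 A A' (piQ A A' t)).n → A)).1 = a • t := rfl
    rw [hval] at hkey
    rw [← hkey, map_smul]

/-- The cocone `Econe` is a colimit. -/
noncomputable def EisColimit : IsColimit (Econe A A') where
  desc s := ModuleCat.ofHom (Edesc A A' s)
  fac s x := by
    ext e
    exact (key_claim A A' s x e).symm
  uniq s m hm := by
    ext t
    have h2 := hm (ob1 A A' (piQ A A' t))
    exact ConcreteCategory.congr_hom h2 (elt A A' t)

/-- The inclusion of `A` into each pullback. -/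
noncomputable def inclE (x : FreeCover A (QMod A A')) : A →ₗ[A] Esub A A' x :=
  LinearMap.codRestrict (Esub A A' x)
    ((LinearMap.inl A A' (Fin x.n → A)) ∘ₗ (Algebra.linearMap A A')) (fun a => by
      show ((algebraMap A A' a : A'), (0 : Fin x.n → A)) ∈ Esub A A' x
      rw [mem_Esub, map_zero, Submodule.mkQ_apply, Submodule.Quotient.mk_eq_zero]
      exact ⟨a, rfl⟩)

lemma inclE_val (x : FreeCover A (QMod A A')) (a : A) :
    (inclE A A' x a : A' × (Fin x.n → A)) = (algebraMap A A' a, 0) := rfl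

lemma EsubMap_inclE {x y : FreeCover A (QMod A A')} (g : x ⟶ y) (a : A) :
    EsubMap A A' g (inclE A A' x a) = inclE A A' y a := by
  apply Subtype.ext
  rw [EsubMap_val, inclE_val, inclE_val]
  show (algebraMap A A' a, g.1 0) = (algebraMap A A' a, 0)
  rw [map_zero]

noncomputable def sigmaE (x : FreeCover A (QMod A A')) : (Fin x.n → A) →ₗ[A] Esub A A' x :=
  (Pi.basisFun A (Fin x.n)).constr A (fun i =>
    ⟨(((Submodule.mkQ_surjective _) (x.u (Pi.basisFun A (Fin x.n) i))).choose,
       Pi.basisFun A (Fin x.n) i), by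
      rw [mem_Esub]
      exact ((Submodule.mkQ_surjective _) (x.u (Pi.basisFun A (Fin x.n) i))).choose_spec⟩)

lemma snd_sigmaE (x : FreeCover A (QMod A A')) (p : Fin x.n → A) :
    (sigmaE A A' x p : A' × (Fin x.n → A)).2 = p := by
  have h : (LinearMap.snd A A' (Fin x.n → A)) ∘ₗ (Esub A A' x).subtype ∘ₗ sigmaE A A' x
      = LinearMap.id := by
    apply Module.Basis.ext (Pi.basisFun A (Fin x.n))
    intro i
    simp only [LinearMap.comp_apply]
    rw [sigmaE, Module.Basis.constr_basis]
    rfl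
  exact LinearMap.congr_fun h p

noncomputable def psiE (x : FreeCover A (QMod A A')) :
    (A × (Fin x.n → A)) →ₗ[A] Esub A A' x :=
  (inclE A A' x) ∘ₗ (LinearMap.fst A A (Fin x.n → A))
    + (sigmaE A A' x) ∘ₗ (LinearMap.snd A A (Fin x.n → A))

lemma psiE_apply (x : FreeCover A (QMod A A')) (a : A) (p : Fin x.n → A) :
    psiE A A' x (a, p) = inclE A A' x a + sigmaE A A' x p := rfl

lemma psiE_bijective (x : FreeCover A (QMod A A')) : Function.Bijective (psiE A A' x) := by
  constructor
  · rw [injective_iff_map_eq_zero]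
    rintro ⟨a, p⟩ h0
    rw [psiE_apply] at h0
    have hval := congrArg (Subtype.val : Esub A A' x → A' × (Fin x.n → A)) h0
    have hsnd := congrArg Prod.snd hval
    have hp : p = 0 := by
      have : (0 : Fin x.n → A) + (sigmaE A A' x p : A' × (Fin x.n → A)).2 = 0 := by
        have : ((inclE A A' x a : A' × (Fin x.n → A)) + (sigmaE A A' x p : A' × (Fin x.n → A))).2 = 0 := hsnd
        simpa [inclE_val] using this
      rwa [zero_add, snd_sigmaE] at this
    have hfst := congrArg Prod.fst hval
    have ha : algebraMap A A' a = 0 := by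
      have : ((inclE A A' x a : A' × (Fin x.n → A)) + (sigmaE A A' x p : A' × (Fin x.n → A))).1 = 0 := hfst
      rw [hp, map_zero] at this
      simpa [inclE_val] using this
    have : a = 0 := unit_injective A A' (by simpa using ha)
    simp [this, hp, Prod.ext_iff]
  · intro e
    set p := (e : A' × (Fin x.n → A)).2 with hp
    set d := e - sigmaE A A' x p with hd
    have hd2 : (d : A' × (Fin x.n → A)).2 = 0 := by
      show ((e : A' × (Fin x.n → A)) - (sigmaE A A' x p : A' × (Fin x.n → A))).2 = 0
      show (e : A' × (Fin x.n → A)).2 - (sigmaE A A' x p : A' × (Fin x.n → A)).2 = 0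
      rw [snd_sigmaE, ← hp, sub_self]
    have hd1 : piQ A A' (d : A' × (Fin x.n → A)).1 = 0 := by
      have := Esub_prop A A' d
      rw [hd2, map_zero] at this
      exact this
    have : (d : A' × (Fin x.n → A)).1 ∈ LinearMap.range (Algebra.linearMap A A') := by
      rwa [← Submodule.Quotient.mk_eq_zero]
    obtain ⟨a, ha⟩ := this
    refine ⟨(a, p), ?_⟩
    rw [psiE_apply]
    apply Subtype.ext
    show (inclE A A' x a : A' × (Fin x.n → A)) + (sigmaE A A' x p : A' × (Fin x.n → A)) = (e : A' × (Fin x.n → A))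
    rw [inclE_val]
    apply Prod.ext
    · show algebraMap A A' a + (sigmaE A A' x p : A' × (Fin x.n → A)).1 = (e : A' × (Fin x.n → A)).1
      have : algebraMap A A' a = (e : A' × (Fin x.n → A)).1 - (sigmaE A A' x p : A' × (Fin x.n → A)).1 := ha
      rw [this]
      ring
    · show 0 + (sigmaE A A' x p : A' × (Fin x.n → A)).2 = (e : A' × (Fin x.n → A)).2
      rw [zero_add, snd_sigmaE, hp]

noncomputable def psiEquiv (x : FreeCover A (QMod A A')) :
    (A × (Fin x.n → A)) ≃ₗ[A] Esub A A' x :=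
  LinearEquiv.ofBijective (psiE A A' x) (psiE_bijective A A' x)

noncomputable def basisE (x : FreeCover A (QMod A A')) :
    Module.Basis (Unit ⊕ Fin x.n) A (Esub A A' x) :=
  ((Module.Basis.singleton Unit A).prod (Pi.basisFun A (Fin x.n))).map (psiEquiv A A' x)

noncomputable def retE (x : FreeCover A (QMod A A')) : Esub A A' x →ₗ[A] A :=
  (LinearMap.fst A A (Fin x.n → A)) ∘ₗ ((psiEquiv A A' x).symm : _ →ₗ[A] _)

lemma retE_inclE (x : FreeCover A (QMod A A')) (a : A) :
    retE A A' x (inclE A A' x a) = a := by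
  have h : psiEquiv A A' x (a, 0) = inclE A A' x a := by
    show psiE A A' x (a, 0) = inclE A A' x a
    rw [psiE_apply, map_zero, add_zero]
  have h2 : (psiEquiv A A' x).symm (inclE A A' x a) = (a, 0) := by
    rw [← h, LinearEquiv.symm_apply_apply]
  show (LinearMap.fst A A (Fin x.n → A)) ((psiEquiv A A' x).symm (inclE A A' x a)) = a
  rw [h2]
  rfl

end Ediagram
section PartC
variable {A : Type} [CommRing A] {C : Type u} [Category.{v} C] [Abelian C]

/-- Coordinate projection of a based module. -/
noncomputable def projB {N : ModuleCat.{0} A} {ι : Type} [Fintype ι] (b : Module.Basis ι A N) (i : ι) :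
    N ⟶ ModuleCat.of A A := ModuleCat.ofHom (b.coord i : N →ₗ[A] A)

/-- Coordinate injection of a based module. -/
noncomputable def injB {N : ModuleCat.{0} A} {ι : Type} [Fintype ι] (b : Module.Basis ι A N) (i : ι) :
    ModuleCat.of A A ⟶ N := ModuleCat.ofHom (LinearMap.toSpanSingleton A N (b i))

lemma sum_projB_injB {N : ModuleCat.{0} A} {ι : Type} [Fintype ι] (b : Module.Basis ι A N) :
    (∑ i : ι, projB b i ≫ injB b i) = 𝟙 N := by
  ext z
  let ev : (N ⟶ N) →+ N :=
    { toFun := fun f => f z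
      map_zero' := rfl
      map_add' := fun f g => rfl }
  have : (∑ i : ι, projB b i ≫ injB b i) z = ∑ i : ι, (projB b i ≫ injB b i) z :=
    map_sum ev _ _
  rw [this]
  have h1 : ∀ i : ι, (projB b i ≫ injB b i) z = b.repr z i • b i := by
    intro i
    show LinearMap.toSpanSingleton A N (b i) (b.coord i z) = _
    rw [LinearMap.toSpanSingleton_apply, Module.Basis.coord_apply]
  rw [Finset.sum_congr rfl (fun i _ => h1 i)]
  show ∑ i, b.repr z i • b i = z
  exact b.sum_repr z

variable (act : ModAction A C)

/-- The component cones used to build limits preservation for a based module. -/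
noncomputable def coneComp {N : ModuleCat.{0} A} {ι : Type} [Fintype ι] (b : Module.Basis ι A N)
    {J : Type} [SmallCategory J] {K : J ⥤ C}
    (s : Cone (K ⋙ act.T.obj N)) (i : ι) : Cone K where
  pt := s.pt
  π :=
    { app := fun j => s.π.app j ≫ (act.T.map (projB b i)).app (K.obj j)
        ≫ act.unitIso.hom.app (K.obj j)
      naturality := fun j j' f => by
        have h3 : s.π.app j' = s.π.app j ≫ (act.T.obj N).map (K.map f) := by
          have := s.π.naturality f
          simpa using this
        have h2 : (act.T.obj N).map (K.map f) ≫ (act.T.map (projB b i)).app (K.obj j')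
            = (act.T.map (projB b i)).app (K.obj j)
              ≫ (act.T.obj (ModuleCat.of A A)).map (K.map f) :=
          (act.T.map (projB b i)).naturality (K.map f)
        have h1 : (act.T.obj (ModuleCat.of A A)).map (K.map f)
              ≫ act.unitIso.hom.app (K.obj j')
            = act.unitIso.hom.app (K.obj j) ≫ K.map f := by
          have := act.unitIso.hom.naturality (K.map f)
          simpa using this
        simp only [Functor.const_obj_map, Category.id_comp, Category.assoc]
        rw [h3, Category.assoc, reassoc_of% h2, h1]
        simp }

lemma sum_T_proj_inj {N : ModuleCat.{0} A} {ι : Type} [Fintype ι] (b : Module.Basis ι A N) (X : C) :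
    ∑ i : ι, (act.T.map (projB b i)).app X ≫ (act.T.map (injB b i)).app X
      = 𝟙 ((act.T.obj N).obj X) := by
  haveI := act.additiveM X
  have h1 : ∀ i : ι, (act.T.map (projB b i)).app X ≫ (act.T.map (injB b i)).app X
      = (act.T.flip.obj X).map (projB b i ≫ injB b i) := by
    intro i
    rw [Functor.map_comp]
    rfl
  rw [Finset.sum_congr rfl (fun i _ => h1 i), ← Functor.map_sum, sum_projB_injB]
  exact (act.T.flip.obj X).map_id N

lemma preservesFiniteLimits_of_basis (N : ModuleCat.{0} A)
    {ι : Type} [Fintype ι] (b : Module.Basis ι A N) :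
    PreservesFiniteLimits (act.T.obj N) := by
  constructor
  intro J sJ fJ
  constructor
  intro K
  constructor
  intro c hc
  constructor
  refine IsLimit.mk (fun s => ∑ i : ι,
    hc.lift (coneComp act b s i) ≫ act.unitIso.inv.app c.pt
      ≫ (act.T.map (injB b i)).app c.pt) ?_ ?_
  · intro s j
    simp only [Functor.mapCone_π_app]
    rw [Preadditive.sum_comp]
    have hterm : ∀ i : ι,
        (hc.lift (coneComp act b s i) ≫ act.unitIso.inv.app c.pt
          ≫ (act.T.map (injB b i)).app c.pt) ≫ (act.T.obj N).map (c.π.app j)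
        = s.π.app j ≫ (act.T.map (projB b i)).app (K.obj j)
            ≫ (act.T.map (injB b i)).app (K.obj j) := by
      intro i
      have e1 : (act.T.map (injB b i)).app c.pt ≫ (act.T.obj N).map (c.π.app j)
          = (act.T.obj (ModuleCat.of A A)).map (c.π.app j)
            ≫ (act.T.map (injB b i)).app (K.obj j) :=
        ((act.T.map (injB b i)).naturality (c.π.app j)).symm
      have e2 : act.unitIso.inv.app c.pt
            ≫ (act.T.obj (ModuleCat.of A A)).map (c.π.app j)
          = c.π.app j ≫ act.unitIso.inv.app (K.obj j) := by
        have := act.unitIso.inv.naturality (c.π.app j)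
        simpa using this.symm
      have e3 : hc.lift (coneComp act b s i) ≫ c.π.app j
          = s.π.app j ≫ (act.T.map (projB b i)).app (K.obj j)
              ≫ act.unitIso.hom.app (K.obj j) :=
        hc.fac (coneComp act b s i) j
      have e4 : act.unitIso.hom.app (K.obj j) ≫ act.unitIso.inv.app (K.obj j) = 𝟙 _ :=
        act.unitIso.hom_inv_id_app (K.obj j)
      simp only [Category.assoc]
      erw [e1, reassoc_of% e2, reassoc_of% e3, Category.assoc, Category.assoc, reassoc_of% e4]
      rfl
    rw [Finset.sum_congr rfl (fun i _ => hterm i), ← Preadditive.comp_sum,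
      sum_T_proj_inj]
    simp
  · intro s m hm
    have hdec : m = ∑ i : ι, m ≫ (act.T.map (projB b i)).app c.pt
        ≫ (act.T.map (injB b i)).app c.pt := by
      rw [← Preadditive.comp_sum, sum_T_proj_inj act b c.pt]
      simp
    conv_lhs => rw [hdec]
    refine Finset.sum_congr rfl (fun i _ => ?_)
    have hclaim : m ≫ (act.T.map (projB b i)).app c.pt ≫ act.unitIso.hom.app c.pt
        = hc.lift (coneComp act b s i) := by
      apply hc.hom_ext
      intro j
      erw [hc.fac (coneComp act b s i) j]
      have e1 : act.unitIso.hom.app c.pt ≫ c.π.app j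
          = (act.T.obj (ModuleCat.of A A)).map (c.π.app j)
            ≫ act.unitIso.hom.app (K.obj j) := by
        have := act.unitIso.hom.naturality (c.π.app j)
        simpa using this.symm
      have e2 : (act.T.map (projB b i)).app c.pt
            ≫ (act.T.obj (ModuleCat.of A A)).map (c.π.app j)
          = (act.T.obj N).map (c.π.app j) ≫ (act.T.map (projB b i)).app (K.obj j) :=
        ((act.T.map (projB b i)).naturality (c.π.app j)).symm
      simp only [Category.assoc]
      rw [e1, reassoc_of% e2]
      have e3 : m ≫ (act.T.obj N).map (c.π.app j) = s.π.app j := by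
        have := hm j
        simpa using this
      rw [reassoc_of% e3]
      show s.π.app j ≫ (act.T.map (projB b i)).app (K.obj j)
          ≫ act.unitIso.hom.app (K.obj j) = (coneComp act b s i).π.app j
      rfl
    have : m ≫ (act.T.map (projB b i)).app c.pt ≫ (act.T.map (injB b i)).app c.pt
        = (m ≫ (act.T.map (projB b i)).app c.pt ≫ act.unitIso.hom.app c.pt)
          ≫ act.unitIso.inv.app c.pt ≫ (act.T.map (injB b i)).app c.pt := by
      simp only [Category.assoc]
      rw [reassoc_of% (act.unitIso.hom_inv_id_app c.pt)]
    rw [this, hclaim]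

end PartC
section PartB
variable {A : Type} [CommRing A] {C : Type u} [Category.{v} C] [Abelian C]
  [HasFilteredColimits C] [AB5 C] (act : ModAction A C)

lemma preservesFiniteLimits_of_colimit (J : Type v) [SmallCategory J] [IsFiltered J]
    (D : J ⥤ ModuleCat.{0} A) (c : Cocone D) (hc : IsColimit c)
    (hD : ∀ j, PreservesFiniteLimits (act.T.obj (D.obj j))) :
    PreservesFiniteLimits (act.T.obj c.pt) := by
  let G : C ⥤ J ⥤ C := act.T.flip ⋙ (Functor.whiskeringLeft J (ModuleCat.{0} A) C).obj D
  haveI hG : PreservesFiniteLimits G := by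
    apply preservesFiniteLimits_of_evaluation
    intro j
    haveI := hD j
    exact preservesFiniteLimits_of_natIso
      (show act.T.obj (D.obj j) ≅ G ⋙ (evaluation J C).obj j from
        NatIso.ofComponents (fun X => Iso.refl _) (fun f => by
          simp only [Iso.refl_hom, Category.comp_id, Category.id_comp]
          rfl))
  haveI hcolim : PreservesFiniteLimits (colim (J := J) (C := C)) := inferInstance
  haveI hH : PreservesFiniteLimits (G ⋙ colim) := comp_preservesFiniteLimits _ _
  have hX : ∀ X : C, IsColimit ((act.T.flip.obj X).mapCocone c) := fun X => by
    haveI := act.colimM X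
    exact isColimitOfPreserves (act.T.flip.obj X) hc
  let α : ∀ X : C, (act.T.obj c.pt).obj X ≅ (G ⋙ colim).obj X := fun X =>
    (hX X).coconePointUniqueUpToIso (colimit.isColimit (G.obj X))
  have hnat : ∀ {X Y : C} (f : X ⟶ Y),
      (act.T.obj c.pt).map f ≫ (α Y).hom = (α X).hom ≫ (G ⋙ colim).map f := by
    intro X Y f
    apply (hX X).hom_ext
    intro j
    have e1 : (act.T.flip.obj X).map (c.ι.app j) ≫ (act.T.obj c.pt).map f
        = (act.T.obj (D.obj j)).map f ≫ (act.T.flip.obj Y).map (c.ι.app j) :=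
      ((act.T.map (c.ι.app j)).naturality f).symm
    have e2 : (act.T.flip.obj Y).map (c.ι.app j) ≫ (α Y).hom = colimit.ι (G.obj Y) j :=
      IsColimit.comp_coconePointUniqueUpToIso_hom (hX Y) (colimit.isColimit (G.obj Y)) j
    have e3 : (act.T.flip.obj X).map (c.ι.app j) ≫ (α X).hom = colimit.ι (G.obj X) j :=
      IsColimit.comp_coconePointUniqueUpToIso_hom (hX X) (colimit.isColimit (G.obj X)) j
    have e4 : colimit.ι (G.obj X) j ≫ colim.map (G.map f)
        = (act.T.obj (D.obj j)).map f ≫ colimit.ι (G.obj Y) j := by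
      have := colimit.ι_map (G.map f) j
      exact this
    show (act.T.flip.obj X).map (c.ι.app j) ≫ (act.T.obj c.pt).map f ≫ (α Y).hom
        = (act.T.flip.obj X).map (c.ι.app j) ≫ (α X).hom ≫ (G ⋙ colim).map f
    rw [reassoc_of% e1, e2, reassoc_of% e3]
    exact e4.symm
  exact preservesFiniteLimits_of_natIso (NatIso.ofComponents α hnat).symm

/-- The constant cocone over a filtered category is a colimit. -/
noncomputable def isColimitConstCocone (J : Type v) [SmallCategory J] [IsFiltered J] (W : C) :
    IsColimit (Cocone.mk W
      { app := fun _ : J => 𝟙 W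
        naturality := fun _ _ _ => by simp } :
      Cocone ((Functor.const J).obj W)) := by
  have hconst : ∀ (s : Cocone ((Functor.const J).obj W)) (j j' : J),
      s.ι.app j = s.ι.app j' := by
    intro s j j'
    have h1 : ∀ (a b : J) (g : a ⟶ b), s.ι.app a = s.ι.app b := by
      intro a b g
      have := s.ι.naturality g
      simpa using this.symm
    obtain ⟨k, f, g, -⟩ := IsFilteredOrEmpty.cocone_objs j j'
    rw [h1 j k f, h1 j' k g]
  exact
    { desc := fun s => s.ι.app (IsFiltered.nonempty.some)
      fac := fun s j => by
        rw [hconst s j IsFiltered.nonempty.some]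
        simp
      uniq := fun s m hm => by
        have := hm IsFiltered.nonempty.some
        simpa using this }

lemma mono_T_app (J : Type v) [SmallCategory J] [IsFiltered J]
    (D : J ⥤ ModuleCat.{0} A) (c : Cocone D) (hc : IsColimit c)
    (Z : ModuleCat.{0} A) (τ : ∀ j, Z ⟶ D.obj j)
    (hτnat : ∀ {j j'} (g : j ⟶ j'), τ j ≫ D.map g = τ j')
    (hsplit : ∀ j, ∃ r : D.obj j ⟶ Z, τ j ≫ r = 𝟙 Z)
    (ξ : Z ⟶ c.pt) (hξ : ∀ j, τ j ≫ c.ι.app j = ξ)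
    (X : C) : Mono ((act.T.map ξ).app X) := by
  let F : ModuleCat.{0} A ⥤ C := act.T.flip.obj X
  haveI := act.colimM X
  let Ψ : J ⥤ C := D ⋙ F
  let σ : (Functor.const J).obj (F.obj Z) ⟶ Ψ :=
    { app := fun j => F.map (τ j)
      naturality := fun j j' g => by
        simp only [Functor.const_obj_map, Category.id_comp, Functor.comp_map]
        rw [show Ψ.map g = F.map (D.map g) from rfl, ← F.map_comp, hτnat g]
        simp }
  haveI hmonoapp : ∀ j, Mono (σ.app j) := by
    intro j
    obtain ⟨r, hr⟩ := hsplit j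
    haveI : IsSplitMono (F.map (τ j)) :=
      IsSplitMono.mk' { retraction := F.map r, id := by rw [← F.map_comp, hr, F.map_id] }
    exact inferInstance
  haveI hmono : Mono σ := NatTrans.mono_of_mono_app σ
  haveI : Mono (colim.map σ) := colim.map_mono σ
  let κ : colimit ((Functor.const J).obj (F.obj Z)) ≅ F.obj Z :=
    (colimit.isColimit _).coconePointUniqueUpToIso (isColimitConstCocone J (F.obj Z))
  let θ : colimit Ψ ≅ F.obj c.pt :=
    (colimit.isColimit Ψ).coconePointUniqueUpToIso (isColimitOfPreserves F hc)
  have hfactor : (act.T.map ξ).app X = κ.inv ≫ colim.map σ ≫ θ.hom := by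
    rw [Iso.eq_inv_comp]
    apply colimit.hom_ext
    intro j
    have e1 : colimit.ι ((Functor.const J).obj (F.obj Z)) j ≫ colim.map σ
        = σ.app j ≫ colimit.ι Ψ j := colimit.ι_map σ j
    have e2 : colimit.ι Ψ j ≫ θ.hom = F.map (c.ι.app j) :=
      IsColimit.comp_coconePointUniqueUpToIso_hom (colimit.isColimit Ψ)
        (isColimitOfPreserves F hc) j
    have e3 : colimit.ι ((Functor.const J).obj (F.obj Z)) j ≫ κ.hom = 𝟙 (F.obj Z) :=
      IsColimit.comp_coconePointUniqueUpToIso_hom (colimit.isColimit _)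
        (isColimitConstCocone J (F.obj Z)) j
    rw [reassoc_of% e1, e2, reassoc_of% e3]
    rw [← F.map_comp, hξ j]
    exact (Category.id_comp _).trans rfl
  rw [hfactor]
  infer_instance

end PartB
/-- If `A'` is a faithfully flat `A`-algebra and `C` an `A`-linear abelian category with
exact filtered colimits, then the functor `X ↦ A' ⊗_A X : C → C` is exact and faithful. -/
theorem faithfully_flat_tensor_exact_faithful (A : Type) [CommRing A]
    (A' : Type) [CommRing A'] [Algebra A A'] [Module.FaithfullyFlat A A']
    (C : Type u) [Category.{v} C] [Abelian C] [Linear A C]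
    [HasFilteredColimits C] [AB5 C] (act : ModAction A C) :
    Nonempty (PreservesFiniteLimits (act.T.obj (ModuleCat.of A A'))) ∧
    Nonempty (PreservesFiniteColimits (act.T.obj (ModuleCat.of A A'))) ∧
    (act.T.obj (ModuleCat.of A A')).Faithful := by
  let e := ULiftHomULiftCategory.equiv.{v, v} (FreeCover A (QMod A A'))
  letI J := ULiftHom.{v} (ULift.{v} (FreeCover A (QMod A A')))
  haveI : IsFiltered J := IsFiltered.of_equivalence e
  let D : J ⥤ ModuleCat.{0} A := e.inverse ⋙ Ediag A A'
  let c : Cocone D := (Econe A A').whisker e.inverse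
  have hc : IsColimit c := (EisColimit A A').whiskerEquivalence e.symm
  have hPFL : PreservesFiniteLimits (act.T.obj (ModuleCat.of A A')) :=
    preservesFiniteLimits_of_colimit act J D c hc (fun j =>
      preservesFiniteLimits_of_basis act ((Ediag A A').obj (e.inverse.obj j))
        (basisE A A' (e.inverse.obj j)))
  refine ⟨⟨hPFL⟩, ⟨act.rightExactX _⟩, ?_⟩
  have hmono : ∀ X : C, Mono ((act.T.map
      (show ModuleCat.of A A ⟶ ModuleCat.of A A' from ModuleCat.ofHom (Algebra.linearMap A A'))).app X) := by
    intro X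
    exact mono_T_app act J D c hc (ModuleCat.of A A)
      (fun j => (ModuleCat.ofHom (inclE A A' (e.inverse.obj j)) : ModuleCat.of A A ⟶ D.obj j))
      (fun {j j'} g => by apply ModuleCat.hom_ext; apply LinearMap.ext; intro a; exact EsubMap_inclE A A' (e.inverse.map g) a)
      (fun j => ⟨ModuleCat.ofHom (retE A A' (e.inverse.obj j)), by
        apply ModuleCat.hom_ext; apply LinearMap.ext; intro a; exact retE_inclE A A' (e.inverse.obj j) a⟩)
      (ModuleCat.ofHom (Algebra.linearMap A A')) (fun j => by ext a; rfl) X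
  refine ⟨fun {X Y} {f g} hfg => ?_⟩
  haveI := act.additiveX (ModuleCat.of A A')
  have h0 : (act.T.obj (ModuleCat.of A A')).map (f - g) = 0 := by
    rw [Functor.map_sub, hfg, sub_self]
  let η := act.T.map
    (show ModuleCat.of A A ⟶ ModuleCat.of A A' from ModuleCat.ofHom (Algebra.linearMap A A'))
  have hnatη := η.naturality (f - g)
  have h1 : (act.T.obj (ModuleCat.of A A)).map (f - g) ≫ η.app Y = 0 := by
    rw [hnatη, h0, Limits.comp_zero]
  haveI := hmono Y
  have h2 : (act.T.obj (ModuleCat.of A A)).map (f - g) = 0 :=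
    (cancel_mono (η.app Y)).1 (by rw [h1, Limits.zero_comp])
  have h3 := act.unitIso.hom.naturality (f - g)
  rw [h2, Limits.zero_comp] at h3
  have h4 : f - g = 0 := by
    apply (cancel_epi (act.unitIso.hom.app X)).1
    rw [Limits.comp_zero]
    have : act.unitIso.hom.app X ≫ (𝟭 C).map (f - g) = 0 := h3.symm
    simpa using this
  rw [← sub_eq_zero]
  exact h4
end
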